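/- arXiv:math/9911184 — 7 statements merged into one kernel-verified Lean document; each statement's English description precedes it below -/
import Mathlib

section
/- Let k ≥ 1 and let R be a nonzero complex block matrix of size 2k × k of the form R = (R¹; R²) (R¹ stacked on top of R²), where R¹ and R² are skew-symmetric k × k complex matrices. Then there exists a column vector v₀ ∈ ℂ^k, a column vector u₀ ∈ ℂ^k and scalars λ₁, λ₂ ∈ ℂ such that R¹ v₀ = λ₁ u₀ and R² v₀ = λ₂ u₀, and (λ₁ u₀, λ₂ u₀) ≠ (0, 0). -/
open Matrix

lemma factor_through {K V W U : Type*} [Field K] [AddCommGroup V] [Module K V]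
    [AddCommGroup W] [Module K W] [AddCommGroup U] [Module K U]
    (f : V →ₗ[K] W) (g : V →ₗ[K] U) (hle : LinearMap.ker f ≤ LinearMap.ker g) :
    ∃ h : W →ₗ[K] U, g = h.comp f := by
  let e := f.quotKerEquivRange
  let g' := (LinearMap.ker f).liftQ g hle
  obtain ⟨h, hh⟩ := (g'.comp e.symm.toLinearMap).exists_extend
  refine ⟨h, ?_⟩
  ext x
  have hmem : f x ∈ LinearMap.range f := LinearMap.mem_range_self f x
  have h2 : e (Submodule.Quotient.mk x) = ⟨f x, hmem⟩ := by
    apply Subtype.ext; rfl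
  have h3 : e.symm ⟨f x, hmem⟩ = Submodule.Quotient.mk x := by
    rw [← h2, LinearEquiv.symm_apply_apply]
  calc g x = g' (Submodule.Quotient.mk x) := rfl
    _ = g' (e.symm ⟨f x, hmem⟩) := by rw [h3]
    _ = (g'.comp e.symm.toLinearMap) ⟨f x, hmem⟩ := rfl
    _ = h ((LinearMap.range f).subtype ⟨f x, hmem⟩) := (congrFun (congrArg DFunLike.coe hh) ⟨f x, hmem⟩).symm
    _ = h (f x) := rfl

/-- Let `k ≥ 1` and let `R = (R¹; R²)` be a nonzero complex block matrix
where `R¹` and `R²` are skew-symmetric `k × k` complex matrices. Then there exist a column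
vector `v₀ ∈ ℂ^k`, a column vector `u₀ ∈ ℂ^k` and scalars `λ₁, λ₂ ∈ ℂ` such that
`R¹ v₀ = λ₁ u₀`, `R² v₀ = λ₂ u₀` and `(λ₁ u₀, λ₂ u₀) ≠ (0, 0)`. -/
theorem stmt0 (k : ℕ) (hk : 1 ≤ k) (R1 R2 : Matrix (Fin k) (Fin k) ℂ)
    (h1 : R1ᵀ = -R1) (h2 : R2ᵀ = -R2) (hR : ¬(R1 = 0 ∧ R2 = 0)) :
    ∃ (v₀ u₀ : Fin k → ℂ) (l1 l2 : ℂ),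
      R1.mulVec v₀ = l1 • u₀ ∧ R2.mulVec v₀ = l2 • u₀ ∧
        ¬(l1 • u₀ = 0 ∧ l2 • u₀ = 0) := by
  by_cases hcase : ∃ v, R2.mulVec v = 0 ∧ R1.mulVec v ≠ 0
  · obtain ⟨v, hv2, hv1⟩ := hcase
    exact ⟨v, R1.mulVec v, 1, 0, by simp, by simp [hv2], by simp [hv1]⟩
  push_neg at hcase
  set f1 := Matrix.toLin' R1 with hf1
  set f2 := Matrix.toLin' R2 with hf2
  have happ1 : ∀ v, f1 v = R1.mulVec v := fun v => Matrix.toLin'_apply R1 v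
  have happ2 : ∀ v, f2 v = R2.mulVec v := fun v => Matrix.toLin'_apply R2 v
  have hker : LinearMap.ker f2 ≤ LinearMap.ker f1 := by
    intro v hv
    simp only [LinearMap.mem_ker, happ1, happ2] at *
    exact hcase v hv
  obtain ⟨g, hg⟩ := factor_through f2 f1 hker
  set C := LinearMap.toMatrix' g with hC
  have hCR : R1 = C * R2 := by
    calc R1 = LinearMap.toMatrix' f1 := (LinearMap.toMatrix'_toLin' R1).symm
      _ = LinearMap.toMatrix' (g.comp f2) := by rw [← hg]
      _ = C * LinearMap.toMatrix' f2 := LinearMap.toMatrix'_comp g f2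
      _ = C * R2 := by rw [hf2, LinearMap.toMatrix'_toLin' R2]
  have hR2C : R1 = R2 * Cᵀ := by
    have := congrArg Matrix.transpose (hCR)
    rw [h1, Matrix.transpose_mul, h2] at this
    have : -R1 = -(R2 * Cᵀ) := by rw [this]; rw [Matrix.neg_mul]
    exact neg_injective this
  have hR2ne : R2 ≠ 0 := by
    intro hz
    apply hR
    constructor
    · rw [hCR, hz, Matrix.mul_zero]
    · exact hz
  -- range f2 is nontrivial
  have hex : ∃ v, f2 v ≠ 0 := by
    by_contra hall
    push_neg at hall
    apply hR2ne
    have : f2 = 0 := by ext v; simp [hall]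
    calc R2 = LinearMap.toMatrix' f2 := (LinearMap.toMatrix'_toLin' R2).symm
      _ = LinearMap.toMatrix' (0 : (Fin k → ℂ) →ₗ[ℂ] (Fin k → ℂ)) := by rw [this]
      _ = 0 := LinearEquiv.map_zero _
  obtain ⟨w, hw⟩ := hex
  haveI : Nontrivial (LinearMap.range f2) :=
    nontrivial_of_ne ⟨f2 w, LinearMap.mem_range_self f2 w⟩ 0
      (fun hcon => hw (by simpa using congrArg Subtype.val hcon))
  -- g restricts to range f2
  have hres : ∀ x ∈ LinearMap.range f2, g x ∈ LinearMap.range f2 := by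
    rintro x ⟨y, rfl⟩
    have : g (f2 y) = f1 y := by rw [hg]; rfl
    rw [this]
    refine ⟨Cᵀ.mulVec y, ?_⟩
    rw [happ2, happ1, hR2C, Matrix.mulVec_mulVec]
  set gbar : Module.End ℂ (LinearMap.range f2) := g.restrict hres with hgbar
  obtain ⟨μ, hμ⟩ := Module.End.exists_eigenvalue gbar
  obtain ⟨u, hu⟩ := hμ.exists_hasEigenvector
  obtain ⟨v, hv⟩ := u.2
  have hune : (u : Fin k → ℂ) ≠ 0 := fun hcon => hu.2 (Subtype.ext hcon)
  have heig : g (u : Fin k → ℂ) = μ • (u : Fin k → ℂ) := by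
    have := hu.apply_eq_smul
    have := congrArg Subtype.val this
    simpa [hgbar, LinearMap.restrict_apply] using this
  refine ⟨v, (u : Fin k → ℂ), μ, 1, ?_, ?_, ?_⟩
  · calc R1.mulVec v = f1 v := (happ1 v).symm
      _ = g (f2 v) := by rw [hg]; rfl
      _ = g (u : Fin k → ℂ) := by rw [hv]
      _ = μ • (u : Fin k → ℂ) := heig
  · rw [← happ2, hv, one_smul]
  · intro hcon
    exact hune (by simpa using hcon.2)
end

section
/- Fix k ≥ 2 and let σ = (σ^{ij})_{1≤i,j≤k} be an admissible family. Then for all vectors c = (c₁,…,c_k) and d = (d₁,…,d_k) in ℂ^k, the rank of the 4k × 4k block matrix σ satisfies rk(σ) ≥ 2 · rk(Σ_{i,j} c_i d_j σ^{ij}). -/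
open Matrix

/-- A family `σ = (σ^{ij})` of complex `4×4` matrices is *admissible* if each `σ i j` is
symmetric and `σ i j = -σ j i`.  Such families encode, in the standard bases, the elements
`S = Σ σ^{ij}_{lp} f_l f_p ⊗ b_i ∧ b_j` of `S²ℂ⁴ ⊗ Λ²ℂ^k`. -/
def Admissible (k : ℕ) (σ : Fin k → Fin k → Matrix (Fin 4) (Fin 4) ℂ) : Prop :=
  (∀ i j, (σ i j)ᵀ = σ i j) ∧ (∀ i j, σ i j = -σ j i)

/-- The `4k × 4k` block matrix whose `(i,j)` block is `σ i j`. -/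
def blockMat (k : ℕ) (σ : Fin k → Fin k → Matrix (Fin 4) (Fin 4) ℂ) :
    Matrix (Fin k × Fin 4) (Fin k × Fin 4) ℂ :=
  Matrix.of fun p q => σ p.1 q.1 p.2 q.2

noncomputable section AuxRank
open Module

/-- The submodule `p.prod q` is linearly equivalent to `p × q`. -/
def prodSubEquiv {R M N : Type*} [CommRing R] [AddCommGroup M] [AddCommGroup N]
    [Module R M] [Module R N] (p : Submodule R M) (q : Submodule R N) :
    (p.prod q) ≃ₗ[R] p × q where
  toFun z := (⟨z.1.1, z.2.1⟩, ⟨z.1.2, z.2.2⟩)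
  invFun z := ⟨(z.1.1, z.2.1), z.1.2, z.2.2⟩
  map_add' _ _ := rfl
  map_smul' _ _ := rfl
  left_inv _ := rfl
  right_inv _ := rfl

lemma range_prodMap' {R M N M' N' : Type*} [CommRing R] [AddCommGroup M] [AddCommGroup N]
    [AddCommGroup M'] [AddCommGroup N'] [Module R M] [Module R N] [Module R M'] [Module R N']
    (f : M →ₗ[R] M') (g : N →ₗ[R] N') :
    LinearMap.range (f.prodMap g) = (LinearMap.range f).prod (LinearMap.range g) := by
  ext ⟨x, y⟩
  simp only [LinearMap.mem_range, Submodule.mem_prod, LinearMap.prodMap_apply, Prod.ext_iff,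
    Prod.exists]
  exact ⟨fun ⟨a, b, h⟩ => ⟨⟨a, h.1⟩, ⟨b, h.2⟩⟩, fun ⟨⟨a, ha⟩, ⟨b, hb⟩⟩ => ⟨a, b, ha, hb⟩⟩

lemma rank_fromBlocks_diag {K : Type*} [Field K] {l m : Type*} [Fintype l] [Fintype m]
    (A : Matrix l l K) (B : Matrix m m K) :
    (fromBlocks A 0 0 B).rank = A.rank + B.rank := by
  classical
  let e : ((l ⊕ m) → K) ≃ₗ[K] (l → K) × (m → K) :=
    LinearEquiv.sumArrowLequivProdArrow l m K K
  have hcomp : (fromBlocks A 0 0 B).mulVecLin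
      = e.symm.toLinearMap ∘ₗ (A.mulVecLin.prodMap B.mulVecLin) ∘ₗ e.toLinearMap := by
    apply LinearMap.ext
    intro x
    funext s
    cases s with
    | inl a =>
        simp [e, mulVecLin, mulVec, dotProduct, Fintype.sum_sum_type, fromBlocks,
          LinearEquiv.sumArrowLequivProdArrow]
    | inr b =>
        simp [e, mulVecLin, mulVec, dotProduct, Fintype.sum_sum_type, fromBlocks,
          LinearEquiv.sumArrowLequivProdArrow]
  have hrange : LinearMap.range ((A.mulVecLin.prodMap B.mulVecLin) ∘ₗ e.toLinearMap)
      = LinearMap.range (A.mulVecLin.prodMap B.mulVecLin) :=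
    LinearMap.range_comp_of_range_eq_top _ (LinearEquiv.range e)
  rw [Matrix.rank, hcomp, LinearMap.range_comp, hrange, range_prodMap',
    LinearEquiv.finrank_map_eq, (prodSubEquiv _ _).finrank_eq, Module.finrank_prod]
  rfl

lemma rank_neg' {K : Type*} [Field K] {l m : Type*} [Fintype m] (A : Matrix l m K) :
    (-A).rank = A.rank := by
  have h : (-A).mulVecLin = -A.mulVecLin := by
    ext x
    simp [Matrix.neg_mulVec]
  rw [Matrix.rank, Matrix.rank, h, LinearMap.range_neg]

end AuxRank

set_option maxHeartbeats 1000000 in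
/-- For an admissible family `σ` and all `c, d ∈ ℂ^k`,
`rk(σ) ≥ 2 · rk(Σ_{i,j} c_i d_j σ^{ij})`. -/
theorem stmt2 (k : ℕ) (hk : 2 ≤ k) (σ : Fin k → Fin k → Matrix (Fin 4) (Fin 4) ℂ)
    (hσ : Admissible k σ) :
    ∀ c d : Fin k → ℂ,
      2 * (∑ i, ∑ j, (c i * d j) • σ i j).rank ≤ (blockMat k σ).rank := by
  intro c d
  classical
  set A : Matrix (Fin 4) (Fin 4) ℂ := ∑ i, ∑ j, (c i * d j) • σ i j with hA
  -- the `8 × 4k` compression matrix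
  set P : Matrix (Fin 4 ⊕ Fin 4) (Fin k × Fin 4) ℂ :=
    Matrix.of fun s q =>
      (Sum.elim c d (Sum.map (fun _ => q.1) (fun _ => q.1) s)) *
        (if Sum.elim id id s = q.2 then 1 else 0) with hP
  -- general vanishing/antisymmetry facts
  have key : ∀ u v : Fin k → ℂ,
      (∑ i, ∑ j, (u i * v j) • σ i j) + (∑ i, ∑ j, (v i * u j) • σ i j) = 0 := by
    intro u v
    have h2 : (∑ i, ∑ j, (v i * u j) • σ i j) = ∑ i, ∑ j, (v j * u i) • σ j i :=
      Finset.sum_comm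
    rw [h2, ← Finset.sum_add_distrib]
    refine Finset.sum_eq_zero fun i _ => ?_
    rw [← Finset.sum_add_distrib]
    refine Finset.sum_eq_zero fun j _ => ?_
    rw [hσ.2 j i, smul_neg, mul_comm (v j) (u i)]
    exact add_neg_cancel _
  have hcc : (∑ i, ∑ j, (c i * c j) • σ i j) = 0 := by
    have := key c c
    have h2 : (2 : ℂ) • (∑ i, ∑ j, (c i * c j) • σ i j) = 0 := by
      rw [two_smul]; exact this
    simpa using (smul_eq_zero.mp h2).resolve_left (by norm_num)
  have hdd : (∑ i, ∑ j, (d i * d j) • σ i j) = 0 := by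
    have := key d d
    have h2 : (2 : ℂ) • (∑ i, ∑ j, (d i * d j) • σ i j) = 0 := by
      rw [two_smul]; exact this
    simpa using (smul_eq_zero.mp h2).resolve_left (by norm_num)
  have hdc : (∑ i, ∑ j, (d i * c j) • σ i j) = -A := by
    have := key c d
    rw [hA]
    linear_combination (norm := abel) this
  -- the compressed matrix is the antidiagonal block matrix
  have entry : ∀ u v : Fin k → ℂ, ∀ a b : Fin 4,
      (∑ r : Fin k × Fin 4, (∑ q : Fin k × Fin 4,
        (u q.1 * (if a = q.2 then (1:ℂ) else 0)) * blockMat k σ q r) *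
        (v r.1 * (if b = r.2 then (1:ℂ) else 0)))
      = (∑ i, ∑ j, (u i * v j) • σ i j) a b := by
    intro u v a b
    simp only [Matrix.sum_apply, Matrix.smul_apply, smul_eq_mul, blockMat, Matrix.of_apply,
      Fintype.sum_prod_type, mul_ite, mul_one, mul_zero, ite_mul, zero_mul,
      Finset.sum_ite_eq, Finset.sum_ite_eq', Finset.mem_univ, if_true,
      Finset.sum_mul, Finset.mul_sum]
    rw [Finset.sum_comm]
    exact Finset.sum_congr rfl fun i _ => Finset.sum_congr rfl fun j _ => by ring
  have expand : ∀ s t, (P * blockMat k σ * Pᵀ) s t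
      = ∑ r : Fin k × Fin 4, (∑ q : Fin k × Fin 4, P s q * blockMat k σ q r) * P t r := by
    intro s t
    simp [Matrix.mul_apply]
  have hPQ : P * blockMat k σ * Pᵀ = fromBlocks 0 A (-A) 0 := by
    ext s t
    rcases s with a | a <;> rcases t with b | b
    · rw [expand]
      simp only [hP, Matrix.of_apply, Sum.elim_inl, Sum.map_inl, id_eq]
      refine (entry c c a b).trans ?_
      rw [hcc]
      simp [fromBlocks]
    · rw [expand]
      simp only [hP, Matrix.of_apply, Sum.elim_inl, Sum.elim_inr, Sum.map_inl, Sum.map_inr, id_eq]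
      refine (entry c d a b).trans ?_
      rw [← hA]
      simp [fromBlocks]
    · rw [expand]
      simp only [hP, Matrix.of_apply, Sum.elim_inl, Sum.elim_inr, Sum.map_inl, Sum.map_inr, id_eq]
      refine (entry d c a b).trans ?_
      rw [hdc]
      simp [fromBlocks]
    · rw [expand]
      simp only [hP, Matrix.of_apply, Sum.elim_inr, Sum.map_inr, id_eq]
      refine (entry d d a b).trans ?_
      rw [hdd]
      simp [fromBlocks]
  -- conclude via rank inequalities
  have h1 : (fromBlocks (0 : Matrix (Fin 4) (Fin 4) ℂ) A (-A) 0).rank ≤ (blockMat k σ).rank := by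
    rw [← hPQ]
    exact le_trans (Matrix.rank_mul_le_left _ _) (Matrix.rank_mul_le_right _ _)
  have h2 : (fromBlocks (0 : Matrix (Fin 4) (Fin 4) ℂ) A (-A) 0).rank = 2 * A.rank := by
    have hsub : (fromBlocks (0 : Matrix (Fin 4) (Fin 4) ℂ) A (-A) 0).rank
        = ((fromBlocks (0 : Matrix (Fin 4) (Fin 4) ℂ) A (-A) 0).submatrix
            (Equiv.refl _) (Equiv.sumComm (Fin 4) (Fin 4))).rank :=
      (Matrix.rank_submatrix _ _ _).symm
    have hswap : ((fromBlocks (0 : Matrix (Fin 4) (Fin 4) ℂ) A (-A) 0).submatrix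
        (Equiv.refl _) (Equiv.sumComm (Fin 4) (Fin 4))) = fromBlocks A 0 0 (-A) := by
      ext s t
      rcases s with a | a <;> rcases t with b | b <;> rfl
    rw [hsub, hswap, rank_fromBlocks_diag, rank_neg', two_mul]
  rw [← h2]
  exact h1
end

section
/- Fix k ≥ 2 and let σ̂ = (σ̂^{ij})_{1≤i,j≤4} be a co-admissible family, not all of whose members are zero, such that σ̂^{ij} = 0 whenever both i ≥ 3 and j ≥ 3. Then there exist column vectors B¹, B², B³, B⁴ ∈ ℂ^k, a vector f = (f₁,…,f₄) ∈ ℂ⁴ and a vector b ∈ ℂ^k such that Σ_{j=1}^{4} σ̂^{ij} B^j = f_i b for every i ∈ {1,2,3,4}, and f_i b ≠ 0 for at least one i. -/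
/-!
On block columns `B` supported on a suitable pair of columns (`{3, 4}` if some mixed block
`σ̂^{ij}`, `i ≤ 2 < j`, is nonzero, `{1, 2}` otherwise) the rows `3, 4` of `σ̂` vanish, and the
rows `1, 2` are two linear maps `S, T` into `ℂ^k`, not both zero. If `ker T ⊄ ker S`, any
`v ∈ ker T \ ker S` works. Otherwise skew-symmetry turns `ker T ≤ ker S` into
`range S ≤ range T`, since `range A = (ker Aᵀ)^⊥ = (ker A)^⊥`, and an eigenvector of `S ∘ T⁻¹`
on `range T` gives `S v = μ • T v ≠ 0`.
-/

open Matrix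

/-- A family `σ̂ = (σ̂^{ij})_{1≤i,j≤4}` of complex `k×k` matrices is *co-admissible* if each
`σ̂ i j` is skew-symmetric and `σ̂ i j = σ̂ j i`.  Such families encode, in the standard
bases, the elements `S = Σ σ̂^{ij}_{lp} f_i f_j ⊗ b_l ∧ b_p` of `S²ℂ⁴ ⊗ Λ²ℂ^k`. -/
def CoAdmissible (k : ℕ) (σh : Fin 4 → Fin 4 → Matrix (Fin k) (Fin k) ℂ) : Prop :=
  (∀ i j, (σh i j)ᵀ = -σh i j) ∧ (∀ i j, σh i j = σh j i)

open LinearMap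

namespace LinearMap

variable {K V W : Type*} [Field K] [IsAlgClosed K] [AddCommGroup V] [Module K V]
  [AddCommGroup W] [Module K W] [FiniteDimensional K W]

theorem exists_apply_eq_smul_apply_of_range_le {S T : V →ₗ[K] W} (hST : range S ≤ range T)
    (hT : T ≠ 0) : ∃ (v : V) (μ : K), S v = μ • T v ∧ T v ≠ 0 := by
  obtain ⟨s, hs⟩ := T.rangeRestrict.exists_rightInverse_of_surjective T.range_rangeRestrict
  have hTs : ∀ u, T (s u) = u := fun u => congrArg Subtype.val (LinearMap.congr_fun hs u)
  have : Nontrivial (range T) := Submodule.nontrivial_iff_ne_bot.mpr (mt range_eq_bot.mp hT)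
  -- an eigenvector of `S ∘ T⁻¹` on `range T`
  obtain ⟨μ, hμ⟩ := Module.End.exists_eigenvalue
    ((S.codRestrict (range T) fun v => hST (mem_range_self S v)) ∘ₗ s)
  obtain ⟨u, hu⟩ := hμ.exists_hasEigenvector
  refine ⟨s u, μ, ?_, ?_⟩
  · rw [hTs]
    exact congrArg Subtype.val hu.apply_eq_smul
  · rw [hTs]
    exact_mod_cast hu.2

theorem exists_apply_eq_smul_and_apply_eq_smul {S T : V →ₗ[K] W}
    (hST : ker T ≤ ker S → range S ≤ range T) (hne : S ≠ 0 ∨ T ≠ 0) :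
    ∃ (v : V) (c d : K) (b : W), S v = c • b ∧ T v = d • b ∧ (c • b ≠ 0 ∨ d • b ≠ 0) := by
  by_cases hker : ker T ≤ ker S
  · have hT : T ≠ 0 := by
      rintro rfl
      rw [ker_zero, top_le_iff, ker_eq_top] at hker
      exact hne.resolve_right (· rfl) hker
    obtain ⟨v, μ, hv, hTv⟩ := exists_apply_eq_smul_apply_of_range_le (hST hker) hT
    exact ⟨v, μ, 1, T v, hv, (one_smul K _).symm, .inr (by rwa [one_smul])⟩
  · obtain ⟨v, hTv, hSv⟩ := SetLike.not_le_iff_exists.mp hker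
    refine ⟨v, 1, 0, S v, (one_smul K _).symm, ?_, .inl (by rwa [one_smul])⟩
    rw [zero_smul]
    exact hTv

end LinearMap

namespace Matrix

variable {K ι m n : Type*} [Field K] [Fintype n]

theorem range_mulVecLin_le_of_ker_transpose [Fintype m] [DecidableEq m] {A B : Matrix m n K}
    (hker : ∀ x, Bᵀ *ᵥ x = 0 → Aᵀ *ᵥ x = 0) :
    range A.mulVecLin ≤ range B.mulVecLin := by
  rintro _ ⟨w, rfl⟩
  by_contra hw
  obtain ⟨f, hfw, hf⟩ := Submodule.exists_dual_map_eq_bot_of_notMem hw inferInstance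
  set x := (dotProductEquiv K m).symm f
  have hfx : ∀ y, f y = x ⬝ᵥ y := fun y => by
    rw [← dotProductEquiv_apply_apply, LinearEquiv.apply_symm_apply]
  have hBx : Bᵀ *ᵥ x = 0 := by
    refine dotProduct_eq_zero _ fun v => ?_
    rw [mulVec_transpose, ← dotProduct_mulVec, ← hfx]
    exact (Submodule.eq_bot_iff _).mp hf _ (Submodule.mem_map_of_mem (mem_range_self _ v))
  apply hfw
  rw [hfx, mulVecLin_apply, dotProduct_mulVec, ← mulVec_transpose, hker x hBx, zero_dotProduct]

theorem range_mulVecLin_le_of_ker_le_of_skew [DecidableEq n] {A B : Matrix n n K}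
    (hA : Aᵀ = -A) (hB : Bᵀ = -B) (hker : ker B.mulVecLin ≤ ker A.mulVecLin) :
    range A.mulVecLin ≤ range B.mulVecLin := by
  refine range_mulVecLin_le_of_ker_transpose fun x hx => ?_
  rw [hB, neg_mulVec, neg_eq_zero] at hx
  rw [hA, neg_mulVec, neg_eq_zero]
  exact hker hx

variable [Fintype ι] [DecidableEq ι]

def blockRowLin (M : ι → Matrix m n K) : (ι → n → K) →ₗ[K] m → K :=
  lsum K (fun _ => n → K) K fun j => (M j).mulVecLin

theorem blockRowLin_apply (M : ι → Matrix m n K) (B : ι → n → K) :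
    blockRowLin M B = ∑ j, M j *ᵥ B j := by
  simp [blockRowLin]

theorem blockRowLin_single (M : ι → Matrix m n K) (j : ι) (x : n → K) :
    blockRowLin M (Pi.single j x) = M j *ᵥ x :=
  lsum_piSingle K (fun _ => n → K) K (fun j => (M j).mulVecLin) j x

theorem range_blockRowLin_le_of_ker_le_of_skew [DecidableEq n] {M N : ι → Matrix n n K}
    (hM : ∀ j, (M j)ᵀ = -M j) (hN : ∀ j, (N j)ᵀ = -N j)
    (hker : ker (blockRowLin N) ≤ ker (blockRowLin M)) :
    range (blockRowLin M) ≤ range (blockRowLin N) := by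
  rintro _ ⟨B, rfl⟩
  rw [blockRowLin_apply]
  refine Submodule.sum_mem _ fun j _ => ?_
  have hkerj : ker (N j).mulVecLin ≤ ker (M j).mulVecLin := fun x hx => by
    simpa [blockRowLin_single] using @hker (Pi.single j x) (by simpa [blockRowLin_single] using hx)
  obtain ⟨x, hx⟩ := range_mulVecLin_le_of_ker_le_of_skew (hM j) (hN j) hkerj
    (mem_range_self _ (B j))
  exact ⟨Pi.single j x, by rw [blockRowLin_single]; exact hx⟩

theorem blockRowLin_eq_zero_iff [DecidableEq n] {M : ι → Matrix m n K} :
    blockRowLin M = 0 ↔ M = 0 := by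
  refine ⟨fun h => funext fun j => ext_of_mulVec_single fun i => ?_, fun h => ?_⟩
  · rw [← blockRowLin_single, h, LinearMap.zero_apply, Pi.zero_apply, zero_mulVec]
  · ext B
    simp [blockRowLin_apply, h]

theorem exists_blockRow_eq_smul_of_skew [IsAlgClosed K] [DecidableEq n] {M N : ι → Matrix n n K}
    (hM : ∀ j, (M j)ᵀ = -M j) (hN : ∀ j, (N j)ᵀ = -N j) (hne : M ≠ 0 ∨ N ≠ 0) :
    ∃ (B : ι → n → K) (c d : K) (b : n → K), ∑ j, M j *ᵥ B j = c • b ∧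
      ∑ j, N j *ᵥ B j = d • b ∧ (c • b ≠ 0 ∨ d • b ≠ 0) := by
  simp_rw [← blockRowLin_apply]
  exact exists_apply_eq_smul_and_apply_eq_smul (range_blockRowLin_le_of_ker_le_of_skew hM hN)
    (by simpa only [ne_eq, blockRowLin_eq_zero_iff] using hne)

theorem exists_sum_mulVec_eq_smul_of_two_rows [IsAlgClosed K] [DecidableEq n]
    {σ : ι → ι → Matrix n n K} (hσ : ∀ i j, (σ i j)ᵀ = -σ i j) {i₀ i₁ : ι} (hi : i₀ ≠ i₁)
    (p : ι → Prop) [DecidablePred p] (hrows : ∀ i j, i ≠ i₀ → i ≠ i₁ → p j → σ i j = 0)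
    (hne : ∃ i j, (i = i₀ ∨ i = i₁) ∧ p j ∧ σ i j ≠ 0) :
    ∃ (B : ι → n → K) (f : ι → K) (b : n → K),
      (∀ i, ∑ j, σ i j *ᵥ B j = f i • b) ∧ ∃ i, f i • b ≠ 0 := by
  -- on block columns supported on `p` only the rows `i₀, i₁` survive
  let mask : ι → ι → Matrix n n K := fun i j => if p j then σ i j else 0
  have hmask : ∀ i (B : ι → n → K),
      ∑ j, σ i j *ᵥ (if p j then B j else 0) = ∑ j, mask i j *ᵥ B j := fun i B =>
    Finset.sum_congr rfl fun j _ => by by_cases hj : p j <;> simp [mask, hj]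
  have hskew : ∀ i j, (mask i j)ᵀ = -mask i j := fun i j => by
    by_cases hj : p j <;> simp [mask, hj, hσ]
  have hmask_ne : mask i₀ ≠ 0 ∨ mask i₁ ≠ 0 := by
    obtain ⟨i, j, rfl | rfl, hj, h⟩ := hne
    · exact .inl fun h' => h (by simpa [mask, hj] using congrFun h' j)
    · exact .inr fun h' => h (by simpa [mask, hj] using congrFun h' j)
  obtain ⟨B, c, d, b, h₀, h₁, hcd⟩ :=
    exists_blockRow_eq_smul_of_skew (hskew i₀) (hskew i₁) hmask_ne
  refine ⟨fun j => if p j then B j else 0, fun i => if i = i₀ then c else if i = i₁ then d else 0,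
    b, fun i => ?_, ?_⟩
  · rw [hmask]
    by_cases h0 : i = i₀
    · subst h0
      simpa using h₀
    by_cases h1 : i = i₁
    · subst h1
      simpa [hi.symm] using h₁
    simp only [h0, h1, if_false, zero_smul]
    exact Finset.sum_eq_zero fun j _ => by by_cases hj : p j <;> simp [mask, hj, hrows i j h0 h1]
  · rcases hcd with h | h
    · exact ⟨i₀, by simpa using h⟩
    · exact ⟨i₁, by simpa [hi.symm] using h⟩

end Matrix

theorem stmt4_general (k : ℕ) (σh : Fin 4 → Fin 4 → Matrix (Fin k) (Fin k) ℂ)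
    (hσ : CoAdmissible k σh) (hne : ¬ ∀ i j, σh i j = 0)
    (hvan : ∀ i j : Fin 4, 2 ≤ (i : ℕ) → 2 ≤ (j : ℕ) → σh i j = 0) :
    ∃ (B : Fin 4 → Fin k → ℂ) (f : Fin 4 → ℂ) (b : Fin k → ℂ),
      (∀ i, ∑ j, (σh i j).mulVec (B j) = f i • b) ∧ ∃ i, f i • b ≠ 0 := by
  obtain ⟨hskew, hsymm⟩ := hσ
  have two_le : ∀ i : Fin 4, i ≠ 0 → i ≠ 1 → 2 ≤ (i : ℕ) := by decide
  by_cases hmixed : ∃ i j : Fin 4, (i : ℕ) < 2 ∧ 2 ≤ (j : ℕ) ∧ σh i j ≠ 0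
  · refine exists_sum_mulVec_eq_smul_of_two_rows hskew zero_ne_one (2 ≤ ·.val)
      (fun i j h0 h1 => hvan i j (two_le i h0 h1)) ?_
    obtain ⟨i, j, hi, hj, hij⟩ := hmixed
    exact ⟨i, j, by omega, hj, hij⟩
  · push Not at hmixed
    refine exists_sum_mulVec_eq_smul_of_two_rows hskew zero_ne_one (·.val < 2)
      (fun i j h0 h1 hj => (hsymm i j).trans (hmixed j i hj (two_le i h0 h1))) ?_
    obtain ⟨i, j, hij⟩ : ∃ i j, σh i j ≠ 0 := by simpa using hne
    have hj : (j : ℕ) < 2 := by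
      by_contra hj
      by_cases hi : (i : ℕ) < 2
      exacts [hij (hmixed i j hi (by omega)), hij (hvan i j (by omega) (by omega))]
    have hi : (i : ℕ) < 2 := by
      by_contra hi
      exact hij ((hsymm i j).trans (hmixed j i hj (by omega)))
    exact ⟨i, j, by omega, hj, hij⟩

/-- Let `σ̂` be a nonzero co-admissible family with `σ̂^{ij} = 0` whenever
both `i ≥ 3` and `j ≥ 3` (1-indexed; i.e. `2 ≤ i` and `2 ≤ j` below).  Then there exist
columns `B¹, …, B⁴ ∈ ℂ^k`, a vector `f ∈ ℂ⁴` and `b ∈ ℂ^k` with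
`Σ_j σ̂^{ij} B^j = f_i b` for every `i`, and `f_i b ≠ 0` for some `i`. -/
theorem stmt4 (k : ℕ) (hk : 2 ≤ k) (σh : Fin 4 → Fin 4 → Matrix (Fin k) (Fin k) ℂ)
    (hσ : CoAdmissible k σh) (hne : ¬ ∀ i j, σh i j = 0)
    (hvan : ∀ i j : Fin 4, 2 ≤ (i : ℕ) → 2 ≤ (j : ℕ) → σh i j = 0) :
    ∃ (B : Fin 4 → Fin k → ℂ) (f : Fin 4 → ℂ) (b : Fin k → ℂ),
      (∀ i, ∑ j, (σh i j).mulVec (B j) = f i • b) ∧ ∃ i, f i • b ≠ 0 :=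
  stmt4_general k σh hσ hne hvan
end

section
/- Fix k ≥ 4 and let σ = (σ^{ij})_{1≤i,j≤k} be an admissible family. Suppose that σ^{12} = diag(1,1,1,0), that rk(Σ_{i,j} c_i d_j σ^{ij}) ≤ 3 for all c, d ∈ ℂ^k, and that the 4k × 4k block matrix σ has rank 6. Then every σ^{ij} has zero fourth row and zero fourth column (σ^{ij}_{l4} = σ^{ij}_{4p} = 0 for all i, j, l, p). Consequently, taking f* = (0,0,0,1)ᵀ ∈ ℂ⁴, one has σ · v = 0 for every b* ∈ ℂ^k, where v ∈ ℂ^{4k} is the column vector whose j-th block of size 4 is b*_j f*. -/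
/-!
The six columns of the block matrix indexed by `(1, b)` and `(2, b)`, `b = 1, 2, 3`, are linearly
independent: on the rows `(2, b)` and `(1, b)` they form the matrix `diag(-1, 1) ⊗ 1₃`, because
`σ¹² = -σ²¹ = diag(1,1,1,0)` and `σ¹¹ = σ²² = 0`. Since the rank is `6`, they span the column
space, so a row of the block matrix vanishing on these six columns vanishes identically. This
applies first to the rows `(1, 4)` and `(2, 4)`, then, by antisymmetry, to every row `(i, 4)`;
symmetry of each `σ^{ij}` turns the zero fourth rows into zero fourth columns.
-/

open Matrix

namespace Matrix

theorem linearIndependent_col_comp_of_submatrix {m n ι R : Type*} [Semiring R]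
    (M : Matrix m n R) (t : ι → m) (s : ι → n) (h : LinearIndependent R (M.submatrix t s).col) :
    LinearIndependent R (M.col ∘ s) :=
  h.of_comp (LinearMap.funLeft R R t)

variable {m n ι K : Type*} [Fintype n] [Fintype ι] [Field K]

theorem span_col_comp_eq_range_mulVecLin (M : Matrix m n K) {s : ι → n}
    (hs : LinearIndependent K (M.col ∘ s)) (hrank : M.rank ≤ Fintype.card ι) :
    Submodule.span K (Set.range (M.col ∘ s)) = LinearMap.range M.mulVecLin := by
  refine Submodule.eq_of_le_of_finrank_le ?_ ?_
  · rw [range_mulVecLin]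
    exact Submodule.span_mono (Set.range_comp_subset_range _ _)
  · rw [finrank_span_eq_card hs]
    exact hrank

theorem apply_eq_zero_of_linearIndependent_col_comp (M : Matrix m n K) {s : ι → n}
    (hs : LinearIndependent K (M.col ∘ s)) (hrank : M.rank ≤ Fintype.card ι) {i : m}
    (hi : ∀ a, M i (s a) = 0) (j : n) : M i j = 0 := by
  have hker : LinearMap.range M.mulVecLin ≤ LinearMap.ker (LinearMap.proj i) := by
    rw [← span_col_comp_eq_range_mulVecLin M hs hrank, Submodule.span_le]
    rintro _ ⟨a, rfl⟩
    exact hi a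
  have hcol : M.col j ∈ LinearMap.range M.mulVecLin :=
    range_mulVecLin M ▸ Submodule.subset_span ⟨j, rfl⟩
  exact hker hcol

end Matrix

namespace Admissible

variable {k : ℕ} {σ : Fin k → Fin k → Matrix (Fin 4) (Fin 4) ℂ}

theorem self_eq_zero (hσ : Admissible k σ) (i : Fin k) : σ i i = 0 :=
  Matrix.ext fun l p => self_eq_neg.mp (congrFun₂ (hσ.2 i i) l p)

theorem apply_comm (hσ : Admissible k σ) (i j : Fin k) (l p : Fin 4) :
    σ i j l p = σ i j p l :=
  congrFun₂ (hσ.1 i j) p l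

theorem blockMat_apply_eq_zero (hσ : Admissible k σ) {i₀ i₁ : Fin k}
    (h : σ i₀ i₁ = diagonal ![1, 1, 1, 0]) (hrank : (blockMat k σ).rank ≤ 6)
    {r : Fin k × Fin 4}
    (hr : ∀ b : Fin 3, blockMat k σ r (i₀, b.castSucc) = 0 ∧ blockMat k σ r (i₁, b.castSucc) = 0)
    (q : Fin k × Fin 4) : blockMat k σ r q = 0 := by
  let s : Fin 2 × Fin 3 → Fin k × Fin 4 := fun x => (![i₀, i₁] x.1, x.2.castSucc)
  let t : Fin 2 × Fin 3 → Fin k × Fin 4 := fun x => (![i₁, i₀] x.1, x.2.castSucc)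
  have hminor : (blockMat k σ).submatrix t s = diagonal fun x => ![-1, 1] x.1 := by
    have h₁₀ : σ i₁ i₀ = -diagonal ![1, 1, 1, 0] := by rw [hσ.2, h]
    have hone : ∀ b : Fin 3, ![(1 : ℂ), 1, 1, 0] b.castSucc = 1 := fun b => by fin_cases b <;> rfl
    ext ⟨a', b'⟩ ⟨a, b⟩
    fin_cases a' <;> fin_cases a <;>
      simp [s, t, blockMat, h, h₁₀, hone, hσ.self_eq_zero, diagonal_apply, Prod.ext_iff, apply_ite]
  have hs : LinearIndependent ℂ ((blockMat k σ).col ∘ s) := by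
    refine linearIndependent_col_comp_of_submatrix _ t s ?_
    rw [hminor, linearIndependent_cols_iff_isUnit, isUnit_diagonal, Pi.isUnit_iff]
    rintro ⟨a, b⟩
    fin_cases a <;> simp
  refine apply_eq_zero_of_linearIndependent_col_comp _ hs (by simpa using hrank) ?_ q
  rintro ⟨a, b⟩
  fin_cases a
  exacts [(hr b).1, (hr b).2]

theorem apply_three_eq_zero (hσ : Admissible k σ) {i₀ i₁ : Fin k}
    (h : σ i₀ i₁ = diagonal ![1, 1, 1, 0]) (hrank : (blockMat k σ).rank ≤ 6)
    (i j : Fin k) (p : Fin 4) : σ i j 3 p = 0 := by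
  have row : ∀ i, (∀ b : Fin 3, σ i i₀ 3 b.castSucc = 0 ∧ σ i i₁ 3 b.castSucc = 0) →
      ∀ j p, σ i j 3 p = 0 :=
    fun i hi j p => hσ.blockMat_apply_eq_zero h hrank (r := (i, 3)) hi (j, p)
  have hD : ∀ b : Fin 3, diagonal ![(1 : ℂ), 1, 1, 0] 3 b.castSucc = 0 := fun b =>
    diagonal_apply_ne _ (Fin.castSucc_ne_last b).symm
  have row₀ := row i₀ fun b => ⟨by simp [hσ.self_eq_zero], h ▸ hD b⟩
  have row₁ := row i₁ fun b => ⟨by rw [hσ.2, h, Matrix.neg_apply, hD, neg_zero],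
    by simp [hσ.self_eq_zero]⟩
  exact row i (fun b => ⟨by rw [hσ.2, Matrix.neg_apply, row₀, neg_zero],
    by rw [hσ.2, Matrix.neg_apply, row₁, neg_zero]⟩) j p

end Admissible

/-- Let `k ≥ 4`, let `σ` be an admissible family with
`σ¹² = diag(1,1,1,0)`, `rk(Σ_{i,j} c_i d_j σ^{ij}) ≤ 3` for all `c, d ∈ ℂ^k`, and block
matrix of rank `6`.  Then every `σ^{ij}` has zero fourth row and zero fourth column, and
consequently, with `f* = (0,0,0,1)ᵀ`, one has `σ · v = 0` for every `b* ∈ ℂ^k`, where `v`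
is the column whose `j`-th block of size 4 is `b*_j f*`. -/
theorem stmt5 (k : ℕ) (hk : 4 ≤ k) (σ : Fin k → Fin k → Matrix (Fin 4) (Fin 4) ℂ)
    (hσ : Admissible k σ)
    (h12 : σ ⟨0, by omega⟩ ⟨1, by omega⟩ = Matrix.diagonal ![1, 1, 1, 0])
    (hrank : (blockMat k σ).rank = 6) :
    (∀ (i j : Fin k) (l p : Fin 4), σ i j l 3 = 0 ∧ σ i j 3 p = 0) ∧
      ∀ bst : Fin k → ℂ,
        (blockMat k σ).mulVec (fun q => bst q.1 * ![0, 0, 0, 1] q.2) = 0 := by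
  have row3 := hσ.apply_three_eq_zero h12 hrank.le
  have col3 : ∀ i j l, σ i j l 3 = 0 := fun i j l => (hσ.apply_comm i j l 3).trans (row3 i j l)
  refine ⟨fun i j l p => ⟨col3 i j l, row3 i j p⟩, fun bst => ?_⟩
  ext p
  refine Finset.sum_eq_zero fun ⟨j, b⟩ _ => ?_
  fin_cases b <;> simp [blockMat, col3]
end

section
/- Let k = 5 and let σ = (σ^{ij})_{1≤i,j≤5} be an admissible family such that σ^{12} is the 4×4 identity matrix and the 20 × 20 block matrix σ has rank 8. Then: (i) σ^{ji} = σ^{1j} σ^{2i} − σ^{2j} σ^{1i} for all 3 ≤ i, j ≤ 5; and (ii) for all t₁, t₂, t₃ ∈ ℂ the matrices t₁σ^{13} + t₂σ^{14} + t₃σ^{15} and t₁σ^{23} + t₂σ^{24} + t₃σ^{25} commute. -/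
open Matrix

/-!
With `σ¹² = 1`, the `8` columns of the block matrix belonging to the block columns `1, 2` are
independent: their entries in the block rows `1, 2` form `A = [[0, 1], [-1, 0]]`. Rank `8` forces
every column to be a combination of them, and reading off the coefficients in the block rows
`1, 2` factors the block matrix as `C A⁻¹ R` with `A⁻¹ = -A`; block `(j, i)` of this
factorization is (i). By (i), `σ^{1i} σ^{2j} - σ^{2i} σ^{1j} = σ^{ij}` is antisymmetric in
`(i, j)`, so the commutator of the two pencils, `∑ tᵢ tⱼ (σ^{1i} σ^{2j} - σ^{2i} σ^{1j})`,
vanishes.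
-/

namespace Matrix

theorem range_mulVecLin_submatrix_id_le {R m n p : Type*} [CommSemiring R] [Fintype n]
    [Fintype p] (M : Matrix m n R) (c : p → n) :
    LinearMap.range (M.submatrix id c).mulVecLin ≤ LinearMap.range M.mulVecLin := by
  rw [range_mulVecLin, range_mulVecLin]
  exact Submodule.span_mono (Set.range_comp_subset_range c Mᵀ)

theorem eq_submatrix_mul_mul_submatrix_of_rank_eq {K m n p : Type*} [Field K] [Fintype n]
    [Fintype p] [DecidableEq p] (M : Matrix m n K) (r : p → m) (c : p → n) (B : Matrix p p K)
    (hBA : B * M.submatrix r c = 1) (hrank : M.rank = Fintype.card p) :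
    M = M.submatrix id c * B * M.submatrix r id := by
  set C := M.submatrix id c
  have hC_inj : Function.Injective C.mulVecLin := by
    rw [← LinearMap.ker_eq_bot, LinearMap.ker_eq_bot']
    intro v hv
    have hA : M.submatrix r c *ᵥ v = 0 := funext fun q => congrFun hv (r q)
    rw [← one_mulVec v, ← hBA, ← mulVec_mulVec, hA, mulVec_zero]
  have hrange : LinearMap.range C.mulVecLin = LinearMap.range M.mulVecLin := by
    refine Submodule.eq_of_le_of_finrank_le (range_mulVecLin_submatrix_id_le M c) ?_
    rw [LinearMap.finrank_range_of_inj hC_inj, Module.finrank_fintype_fun_eq_card, ← hrank]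
    rfl
  have hcol (j : n) : Mᵀ j ∈ LinearMap.range C.mulVecLin := by
    rw [hrange, range_mulVecLin]
    exact Submodule.subset_span ⟨j, rfl⟩
  choose X hX using hcol
  set Y : Matrix p n K := (of X)ᵀ
  have hMY : M = C * Y := by
    ext i j
    exact (congrFun (hX j) i).symm
  have hRY : M.submatrix r id = M.submatrix r c * Y := by
    conv_lhs => rw [hMY]
    rfl
  calc M = C * Y := hMY
    _ = C * (B * M.submatrix r c * Y) := by rw [hBA, Matrix.one_mul]
    _ = C * B * M.submatrix r id := by rw [hRY, Matrix.mul_assoc, Matrix.mul_assoc]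

theorem comp_mul {I J J' n R : Type*} [Fintype J] [Fintype n] [NonUnitalNonAssocSemiring R]
    (S : Matrix I J (Matrix n n R)) (T : Matrix J J' (Matrix n n R)) :
    comp I J' n n R (S * T) = comp I J n n R S * comp J J' n n R T := by
  ext ⟨i, k⟩ ⟨j, l⟩
  simp only [comp_apply, mul_apply, Matrix.sum_apply, Fintype.sum_prod_type]

theorem comp_submatrix_prodMap {I J I' J' K L R : Type*} (S : Matrix I J (Matrix K L R))
    (f : I' → I) (g : J' → J) :
    (comp I J K L R S).submatrix (Prod.map f id) (Prod.map g id) =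
      comp I' J' K L R (S.submatrix f g) :=
  rfl

end Matrix

theorem block_eq_of_rank_comp_eq {K ι n : Type*} [Field K] [Fintype ι] [Fintype n]
    [DecidableEq n] {σ : ι → ι → Matrix n n K} (hanti : ∀ i j, σ i j = -σ j i)
    (hdiag : ∀ i, σ i i = 0) {i₀ i₁ : ι} (h01 : σ i₀ i₁ = 1)
    (hrank : (comp ι ι n n K (of σ)).rank = 2 * Fintype.card n) (i j : ι) :
    σ j i = σ i₀ j * σ i₁ i - σ i₁ j * σ i₀ i := by
  have h10 : σ i₁ i₀ = -1 := by rw [hanti, h01]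
  set g : Fin 2 → ι := ![i₀, i₁]
  set A : Matrix (Fin 2) (Fin 2) (Matrix n n K) := (of σ).submatrix g g
  have hAA : A * A = -1 := by
    ext1 e e'
    simp only [A, mul_apply, Fin.sum_univ_two, submatrix_apply, of_apply]
    fin_cases e <;> fin_cases e' <;> simp [g, h01, h10, hdiag]
  have hBA : comp _ _ _ _ _ (-A) *
      (comp ι ι n n K (of σ)).submatrix (Prod.map g id) (Prod.map g id) = 1 := by
    rw [comp_submatrix_prodMap, ← comp_mul, neg_mul, hAA, neg_neg, comp_one]
  have hfactor : of σ = (of σ).submatrix id g * -A * (of σ).submatrix g id := by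
    have := eq_submatrix_mul_mul_submatrix_of_rank_eq _ _ _ _ hBA (by simpa using hrank)
    apply (comp ι ι n n K).injective
    rwa [comp_mul, comp_mul]
  have hji := congrFun (congrFun hfactor j) i
  simp only [A, g, mul_apply, Fin.sum_univ_two, submatrix_apply, of_apply, Matrix.neg_apply, id,
    cons_val_zero, cons_val_one, h01, h10, hdiag] at hji
  rw [hji, hanti j i₀, hanti j i₁]
  noncomm_ring

theorem commute_sum_smul_of_antisymm {K R ι : Type*} [CommSemiring K] [Ring R] [Algebra K R]
    [IsAddTorsionFree R] [Fintype ι] (t : ι → K) {P Q : ι → R}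
    (h : ∀ i j, P i * Q j - Q i * P j = -(P j * Q i - Q j * P i)) :
    Commute (∑ i, t i • P i) (∑ i, t i • Q i) := by
  have hcomm : (∑ i, t i • P i) * (∑ i, t i • Q i) - (∑ i, t i • Q i) * (∑ i, t i • P i) =
      ∑ i, ∑ j, (t i * t j) • (P i * Q j - Q i * P j) := by
    simp only [Finset.sum_mul, Finset.mul_sum, smul_mul_smul_comm, smul_sub,
      Finset.sum_sub_distrib]
    congr 1 <;> exact Finset.sum_comm
  have hswap : ∑ i, ∑ j, (t i * t j) • (P i * Q j - Q i * P j) =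
      -∑ i, ∑ j, (t i * t j) • (P i * Q j - Q i * P j) := by
    conv_lhs => rw [Finset.sum_comm]
    simp only [← Finset.sum_neg_distrib, ← smul_neg]
    refine Finset.sum_congr rfl fun j _ => Finset.sum_congr rfl fun i _ => ?_
    rw [h, mul_comm]
  exact sub_eq_zero.1 (hcomm.trans (self_eq_neg.1 hswap))

/-- Let `k = 5` and let `σ` be an admissible family with `σ¹² = 1` (the
`4×4` identity) and `20 × 20` block matrix of rank `8`.  Then (i)
`σ^{ji} = σ^{1j} σ^{2i} − σ^{2j} σ^{1i}` for all `3 ≤ i, j ≤ 5` (1-indexed; indices `0,1`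
and `2 ≤ i` below), and (ii) for all `t₁, t₂, t₃ ∈ ℂ` the matrices
`t₁σ^{13} + t₂σ^{14} + t₃σ^{15}` and `t₁σ^{23} + t₂σ^{24} + t₃σ^{25}` commute. -/
theorem stmt6 (σ : Fin 5 → Fin 5 → Matrix (Fin 4) (Fin 4) ℂ) (hσ : Admissible 5 σ)
    (h12 : σ 0 1 = 1) (hrank : (blockMat 5 σ).rank = 8) :
    (∀ i j : Fin 5, 2 ≤ (i : ℕ) → 2 ≤ (j : ℕ) →
        σ j i = σ 0 j * σ 1 i - σ 1 j * σ 0 i) ∧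
      ∀ t1 t2 t3 : ℂ,
        Commute (t1 • σ 0 2 + t2 • σ 0 3 + t3 • σ 0 4)
          (t1 • σ 1 2 + t2 • σ 1 3 + t3 • σ 1 4) := by
  obtain ⟨-, hanti⟩ := hσ
  have : IsAddTorsionFree (Matrix (Fin 4) (Fin 4) ℂ) := .of_module_rat _
  have hblock := block_eq_of_rank_comp_eq hanti (fun i => self_eq_neg.1 (hanti i i)) h12
    (hrank : (comp _ _ _ _ ℂ (of σ)).rank = 2 * Fintype.card (Fin 4))
  refine ⟨fun i j _ _ => hblock i j, fun t1 t2 t3 => ?_⟩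
  have hcomm := commute_sum_smul_of_antisymm ![t1, t2, t3] (P := fun i => σ 0 (![2, 3, 4] i))
    (Q := fun i => σ 1 (![2, 3, 4] i)) fun i j => by rw [← hblock, ← hblock, hanti]
  simpa [Fin.sum_univ_three] using hcomm
end

section
/- Let k = 5 and let σ = (σ^{ij})_{1≤i,j≤5} be an admissible family such that σ^{12} = diag(1,1,1,0) and the 20 × 20 block matrix σ has rank 8. Then the 4th row and the 8th row of the block matrix σ are linearly dependent. Consequently, there exists (b₁, b₂) ∈ ℂ² with (b₁, b₂) ≠ (0,0) such that σ · v = 0, where v ∈ ℂ^{20} is the column vector with first block b₁ f*, second block b₂ f*, and zero third, fourth and fifth blocks, for f* = (0,0,0,1)ᵀ ∈ ℂ⁴. -/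
open Matrix

/-- Let `k = 5` and let `σ` be an admissible family with
`σ¹² = diag(1,1,1,0)` and `20 × 20` block matrix of rank `8`.  Then the 4th and 8th rows of
the block matrix (the rows indexed by `(0,3)` and `(1,3)`) are linearly dependent, and
consequently there exists `(b₁, b₂) ≠ (0,0)` such that `σ · v = 0`, where `v` has first
block `b₁ f*`, second block `b₂ f*` and zero remaining blocks, for `f* = (0,0,0,1)ᵀ`. -/
theorem stmt8 (σ : Fin 5 → Fin 5 → Matrix (Fin 4) (Fin 4) ℂ) (hσ : Admissible 5 σ)
    (h12 : σ 0 1 = Matrix.diagonal ![1, 1, 1, 0])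
    (hrank : (blockMat 5 σ).rank = 8) :
    (∃ c1 c2 : ℂ, ¬(c1 = 0 ∧ c2 = 0) ∧
        ∀ q : Fin 5 × Fin 4,
          c1 * blockMat 5 σ (0, 3) q + c2 * blockMat 5 σ (1, 3) q = 0) ∧
      ∃ b1 b2 : ℂ, ¬(b1 = 0 ∧ b2 = 0) ∧
        (blockMat 5 σ).mulVec
          (fun q => (if q.1 = 0 then b1 else if q.1 = 1 then b2 else 0) *
            ![0, 0, 0, 1] q.2) = 0 := by
  obtain ⟨hsymm, hskew⟩ := hσ
  set M := blockMat 5 σ with hMdef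
  -- diagonal blocks vanish
  have hdiag : ∀ i, σ i i = 0 := by
    intro i
    have h := hskew i i
    have h2 : (2 : ℂ) • σ i i = 0 := by rw [two_smul]; nth_rewrite 2 [h]; simp
    simpa using (smul_eq_zero.mp h2).resolve_left (by norm_num)
  have h21 : σ 1 0 = -Matrix.diagonal ![1, 1, 1, 0] := by rw [hskew 1 0, h12]
  -- antisymmetry of the block matrix
  have hanti : ∀ p q : Fin 5 × Fin 4, M q p = -M p q := by
    intro p q
    have h1 : σ q.1 p.1 q.2 p.2 = (-σ p.1 q.1) q.2 p.2 := by rw [hskew q.1 p.1]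
    have h2 : σ p.1 q.1 q.2 p.2 = σ p.1 q.1 p.2 q.2 := by
      conv_rhs => rw [← hsymm p.1 q.1]
      rfl
    simp only [hMdef, blockMat, Matrix.of_apply, h1, Matrix.neg_apply, h2]
  -- entries of the four upper-left blocks
  have E00 : ∀ m n : Fin 4, M (0, m) (0, n) = 0 := by
    intro m n; simp [hMdef, blockMat, hdiag 0]
  have E11 : ∀ m n : Fin 4, M (1, m) (1, n) = 0 := by
    intro m n; simp [hMdef, blockMat, hdiag 1]
  have E01 : ∀ m n : Fin 4, M (0, m) (1, n) =
      if m = n then ![(1 : ℂ), 1, 1, 0] m else 0 := by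
    intro m n; simp [hMdef, blockMat, h12, Matrix.diagonal_apply]
  have E10 : ∀ m n : Fin 4, M (1, m) (0, n) =
      -(if m = n then ![(1 : ℂ), 1, 1, 0] m else 0) := by
    intro m n; simp [hMdef, blockMat, h21, Matrix.diagonal_apply]
  -- main claim: rows (0,3) and (1,3) are linearly dependent
  have main : ∃ c1 c2 : ℂ, ¬(c1 = 0 ∧ c2 = 0) ∧
      ∀ q : Fin 5 × Fin 4, c1 * M (0, 3) q + c2 * M (1, 3) q = 0 := by
    by_contra hdep
    push_neg at hdep
    obtain ⟨q0, hq0⟩ := hdep 1 0 (by simp)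
    simp only [one_mul, zero_mul, add_zero] at hq0
    -- the 9 rows
    set f : Fin 9 → Fin 5 × Fin 4 :=
      ![(0, 0), (0, 1), (0, 2), (1, 0), (1, 1), (1, 2), (0, 3), (1, 3), q0] with hf
    have expand : ∀ w : Fin 9 → ℂ, ∑ i, w i =
        w 0 + w 1 + w 2 + w 3 + w 4 + w 5 + w 6 + w 7 + w 8 := by
      intro w
      rw [Fin.sum_univ_castSucc, Fin.sum_univ_eight]
      rfl
    have hLI : LinearIndependent ℂ (fun i => M (f i)) := by
      rw [Fintype.linearIndependent_iff]
      intro g hg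
      have hg'' : ∀ q : Fin 5 × Fin 4,
          g 0 * M (0, 0) q + g 1 * M (0, 1) q + g 2 * M (0, 2) q +
          g 3 * M (1, 0) q + g 4 * M (1, 1) q + g 5 * M (1, 2) q +
          g 6 * M (0, 3) q + g 7 * M (1, 3) q + g 8 * M q0 q = 0 := by
        intro q
        have h := congrFun hg q
        simp only [Finset.sum_apply, Pi.smul_apply, smul_eq_mul, Pi.zero_apply] at h
        rw [expand] at h
        exact h
      have h8z : g 8 = 0 := by
        have h := hg'' (0, 3)
        rw [hanti (0, 3) q0] at h
        simp only [E00, E10] at h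
        simp only [mul_zero, zero_add, add_zero, mul_neg, neg_eq_zero] at h
        simp at h
        rcases h with h | h
        · exact h
        · exact absurd h hq0
      have h0z : g 0 = 0 := by
        have h := hg'' (1, 0); rw [h8z] at h
        simp only [E01, E11] at h; simpa using h
      have h1z : g 1 = 0 := by
        have h := hg'' (1, 1); rw [h8z] at h
        simp only [E01, E11] at h; simpa using h
      have h2z : g 2 = 0 := by
        have h := hg'' (1, 2); rw [h8z] at h
        simp only [E01, E11] at h; simpa using h
      have h3z : g 3 = 0 := by
        have h := hg'' (0, 0); rw [h8z] at h
        simp only [E00, E10] at h; simpa using h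
      have h4z : g 4 = 0 := by
        have h := hg'' (0, 1); rw [h8z] at h
        simp only [E00, E10] at h; simpa using h
      have h5z : g 5 = 0 := by
        have h := hg'' (0, 2); rw [h8z] at h
        simp only [E00, E10] at h; simpa using h
      have h67 : ∀ q : Fin 5 × Fin 4, g 6 * M (0, 3) q + g 7 * M (1, 3) q = 0 := by
        intro q
        have h := hg'' q
        rw [h0z, h1z, h2z, h3z, h4z, h5z, h8z] at h
        simpa using h
      have h6z : g 6 = 0 ∧ g 7 = 0 := by
        by_contra hc
        obtain ⟨q, hq⟩ := hdep (g 6) (g 7) (by tauto)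
        exact hq (h67 q)
      intro i
      fin_cases i <;>
        first
          | exact h0z | exact h1z | exact h2z | exact h3z | exact h4z | exact h5z
          | exact h6z.1 | exact h6z.2 | exact h8z
    have h9 : (9 : ℕ) ≤ M.rank := by
      rw [M.rank_eq_finrank_span_row]
      have hcard : Module.finrank ℂ
          (Submodule.span ℂ (Set.range (fun i => M (f i)))) = 9 := by
        rw [finrank_span_eq_card hLI]; simp
      calc (9 : ℕ)
          = Module.finrank ℂ (Submodule.span ℂ (Set.range (fun i => M (f i)))) :=
            hcard.symm
        _ ≤ Module.finrank ℂ (Submodule.span ℂ (Set.range M)) :=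
            Submodule.finrank_mono (Submodule.span_mono
              (Set.range_comp_subset_range f M))
    omega
  refine ⟨main, ?_⟩
  obtain ⟨c1, c2, hne, hcomb⟩ := main
  refine ⟨c1, c2, hne, ?_⟩
  funext p
  simp only [Matrix.mulVec, dotProduct, Pi.zero_apply]
  rw [Fintype.sum_prod_type]
  simp only [Fin.sum_univ_five, Fin.sum_univ_four]
  norm_num
  rw [if_neg (by decide), if_neg (by decide), if_neg (by decide), if_neg (by decide),
    if_neg (by decide), if_neg (by decide)]
  rw [hanti (0, 3) p, hanti (1, 3) p] at *
  simp only [Matrix.cons_val, show (3 : Fin 5) ≠ 0 by decide, show (3 : Fin 5) ≠ 1 by decide,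
    show (4 : Fin 5) ≠ 0 by decide, show (4 : Fin 5) ≠ 1 by decide, if_false, mul_zero, mul_one, add_zero]
  linear_combination -(hcomb p)
end

section
/- Fix k ≥ 2. For every A ∈ ℂ^{4∗}⊗ℂ^{k∗}⊗ℂ^{2k+2} and every S ∈ S²ℂ⁴⊗Λ²ℂ^k, the following are equivalent: (i) ξ(A, S) = 0; (ii) ⟨dγ|_A(B), S⟩ = 0 for every B ∈ ℂ^{4∗}⊗ℂ^{k∗}⊗ℂ^{2k+2}, where dγ|_A(B) = γ(A + B) − γ(A) − γ(B) is the differential of the quadratic map γ at A evaluated at B, and ⟨·,·⟩ is the natural duality pairing between S²ℂ^{4∗}⊗Λ²ℂ^{k∗} and S²ℂ⁴⊗Λ²ℂ^k. -/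
open Matrix

/-- The Gram coefficients `ω(h_l, h_{l'})` of the standard symplectic form on `ℂ^{2k+2}`,
`ω(h, h') = Σ_{i=1}^{k+1} (h_i h'_{k+1+i} − h_{k+1+i} h'_i)`. -/
def omegaJ (k : ℕ) : Fin (2 * k + 2) → Fin (2 * k + 2) → ℂ := fun l l' =>
  if (l : ℕ) + (k + 1) = (l' : ℕ) then 1
  else if (l' : ℕ) + (k + 1) = (l : ℕ) then -1 else 0

/-- The bilinear map `ξ : (ℂ^{4∗}⊗ℂ^{k∗}⊗ℂ^{2k+2}) × (S²ℂ⁴⊗Λ²ℂ^k) → ℂ⁴⊗ℂ^k⊗ℂ^{2k+2}`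
in coordinates: `ξ(A, S)_{a c l} = 4 Σ_{i,j} A^l_{ij} σ^{jc}_{ia}` for `S` encoded by the
admissible family `σ`. -/
noncomputable def xiMap (k : ℕ) (A : Fin 4 → Fin k → Fin (2 * k + 2) → ℂ)
    (σ : Fin k → Fin k → Matrix (Fin 4) (Fin 4) ℂ) :
    Fin 4 → Fin k → Fin (2 * k + 2) → ℂ :=
  fun a c l => 4 * ∑ i, ∑ j, A i j l * σ j c i a

/-- The coordinates (symmetric in `(i,i')`, skew in `(j,j')`) of the quadratic map
`γ(A) = Σ (1/2) ω(h_l, h_{l'}) A^l_{ij} A^{l'}_{i'j'} (f_i* f_{i'}*) ⊗ (b_j* ∧ b_{j'}*)`. -/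
noncomputable def gammaC (k : ℕ) (A : Fin 4 → Fin k → Fin (2 * k + 2) → ℂ) :
    Fin 4 → Fin 4 → Fin k → Fin k → ℂ :=
  fun i i' j j' => (1 / 4) * ∑ l, ∑ l', omegaJ k l l' *
    (A i j l * A i' j' l' + A i' j l * A i j' l')

/-- The differential `dγ|_A(B) = γ(A + B) − γ(A) − γ(B)` of `γ` at `A`. -/
noncomputable def dgamma (k : ℕ) (A B : Fin 4 → Fin k → Fin (2 * k + 2) → ℂ) :
    Fin 4 → Fin 4 → Fin k → Fin k → ℂ :=
  fun i i' j j' => gammaC k (A + B) i i' j j' - gammaC k A i i' j j' - gammaC k B i i' j j'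

/-- The natural duality pairing between `S²ℂ^{4∗}⊗Λ²ℂ^{k∗}` and `S²ℂ⁴⊗Λ²ℂ^k` in
coordinates: full contraction of the coefficient arrays. -/
noncomputable def pairSS (k : ℕ) (T : Fin 4 → Fin 4 → Fin k → Fin k → ℂ)
    (σ : Fin k → Fin k → Matrix (Fin 4) (Fin 4) ℂ) : ℂ :=
  ∑ i, ∑ i', ∑ j, ∑ j', T i i' j j' * σ j j' i i'

/-! Polarizing `γ` writes `⟨dγ|_A(B), S⟩` as four contractions of `ω(A, B)` against `S`. Since `S`
is symmetric in its `ℂ⁴` indices and skew in its `ℂ^k` indices, while `ω` is skew, all four agree,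
and their sum is `¼ ω(ξ(A, S), B)`, contracted over `ℂ⁴ ⊗ ℂ^k`. As `ω` is nondegenerate, this
vanishes for every `B` exactly when `ξ(A, S) = 0`. -/

theorem forall_sum_sum_dotProduct_eq_zero_iff {α β γ R : Type*} [Fintype α] [Fintype β]
    [Fintype γ] [DecidableEq α] [DecidableEq β] [DecidableEq γ] [NonAssocSemiring R]
    (f : α → β → γ → R) :
    (∀ B : α → β → γ → R, ∑ a, ∑ b, f a b ⬝ᵥ B a b = 0) ↔ f = 0 := by
  refine ⟨fun h => funext fun a => funext fun b => funext fun c => ?_, fun h B => by simp [h]⟩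
  simpa [Pi.single_apply, dotProduct, ite_apply, mul_ite, Finset.sum_ite_eq'] using
    h (Pi.single a (Pi.single b (Pi.single c 1)))

lemma omegaJ_swap (k : ℕ) (l l' : Fin (2 * k + 2)) : omegaJ k l' l = -omegaJ k l l' := by
  unfold omegaJ
  split_ifs <;> first | omega | norm_num

lemma exists_omegaJ_ne_zero_iff (k : ℕ) (l : Fin (2 * k + 2)) :
    ∃ l₀, ∀ m, omegaJ k m l₀ ≠ 0 ↔ m = l := by
  by_cases hl : (l : ℕ) < k + 1
  · refine ⟨⟨l + (k + 1), by omega⟩, fun m => ?_⟩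
    simp only [omegaJ, Fin.ext_iff]
    split_ifs <;> simp <;> omega
  · refine ⟨⟨l - (k + 1), by omega⟩, fun m => ?_⟩
    simp only [omegaJ, Fin.ext_iff]
    split_ifs <;> simp <;> omega

lemma vecMul_omegaJ_eq_zero_iff (k : ℕ) (x : Fin (2 * k + 2) → ℂ) :
    x ᵥ* Matrix.of (omegaJ k) = 0 ↔ x = 0 := by
  refine ⟨fun h => funext fun l => ?_, fun h => by rw [h, zero_vecMul]⟩
  obtain ⟨l₀, hl₀⟩ := exists_omegaJ_ne_zero_iff k l
  have hsum := congrFun h l₀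
  rw [vecMul, dotProduct, Fintype.sum_eq_single l fun m hm => by
    simp [not_not.mp (mt (hl₀ m).mp hm)]] at hsum
  exact (mul_eq_zero.mp hsum).resolve_right ((hl₀ l).mpr rfl)

noncomputable def gammaPolar (k : ℕ) (A B : Fin 4 → Fin k → Fin (2 * k + 2) → ℂ) :
    Fin 4 → Fin 4 → Fin k → Fin k → ℂ :=
  fun i i' j j' => ∑ l, ∑ l', omegaJ k l l' * A i j l * B i' j' l'

lemma dgamma_eq_gammaPolar (k : ℕ) (A B : Fin 4 → Fin k → Fin (2 * k + 2) → ℂ) :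
    dgamma k A B = fun i i' j j' => (1 / 4) * (gammaPolar k A B i i' j j'
      + gammaPolar k B A i i' j j' + gammaPolar k A B i' i j j' + gammaPolar k B A i' i j j') := by
  ext i i' j j'
  simp only [dgamma, gammaC, gammaPolar, Pi.add_apply, ← mul_sub,
    ← Finset.sum_sub_distrib, ← Finset.sum_add_distrib]
  congr 1
  exact Finset.sum_congr rfl fun l _ => Finset.sum_congr rfl fun l' _ => by ring

lemma gammaPolar_swap (k : ℕ) (A B : Fin 4 → Fin k → Fin (2 * k + 2) → ℂ)
    (i i' : Fin 4) (j j' : Fin k) :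
    gammaPolar k B A i i' j j' = -gammaPolar k A B i' i j' j := by
  simp only [gammaPolar, ← Finset.sum_neg_distrib]
  rw [Finset.sum_comm]
  refine Finset.sum_congr rfl fun l' _ => Finset.sum_congr rfl fun l _ => ?_
  rw [omegaJ_swap]
  ring

section pairSS

variable {k : ℕ} {σ : Fin k → Fin k → Matrix (Fin 4) (Fin 4) ℂ}

lemma Admissible.apply_swap_fst (hσ : Admissible k σ) (j j' : Fin k) (i i' : Fin 4) :
    σ j j' i' i = σ j j' i i' :=
  congrFun (congrFun (hσ.1 j j') i) i'

lemma Admissible.apply_swap_snd (hσ : Admissible k σ) (j j' : Fin k) (i i' : Fin 4) :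
    σ j' j i i' = -σ j j' i i' :=
  congrFun (congrFun (hσ.2 j' j) i) i'

lemma pairSS_add (T T' : Fin 4 → Fin 4 → Fin k → Fin k → ℂ) :
    pairSS k (T + T') σ = pairSS k T σ + pairSS k T' σ := by
  simp only [pairSS, Pi.add_apply, add_mul, Finset.sum_add_distrib]

lemma pairSS_smul (c : ℂ) (T : Fin 4 → Fin 4 → Fin k → Fin k → ℂ) :
    pairSS k (c • T) σ = c * pairSS k T σ := by
  simp only [pairSS, Pi.smul_apply, smul_eq_mul, Finset.mul_sum, mul_assoc]

lemma pairSS_neg (T : Fin 4 → Fin 4 → Fin k → Fin k → ℂ) :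
    pairSS k (-T) σ = -pairSS k T σ := by
  simp only [pairSS, Pi.neg_apply, neg_mul, Finset.sum_neg_distrib]

lemma pairSS_swap_fst (hσ : Admissible k σ) (T : Fin 4 → Fin 4 → Fin k → Fin k → ℂ) :
    pairSS k (fun i i' j j' => T i' i j j') σ = pairSS k T σ := by
  rw [pairSS, Finset.sum_comm]
  refine Finset.sum_congr rfl fun i' _ => Finset.sum_congr rfl fun i _ =>
    Finset.sum_congr rfl fun j _ => Finset.sum_congr rfl fun j' _ => ?_
  rw [hσ.apply_swap_fst]

lemma pairSS_swap_snd (hσ : Admissible k σ) (T : Fin 4 → Fin 4 → Fin k → Fin k → ℂ) :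
    pairSS k (fun i i' j j' => T i i' j' j) σ = -pairSS k T σ := by
  simp only [pairSS, ← Finset.sum_neg_distrib]
  refine Finset.sum_congr rfl fun i _ => Finset.sum_congr rfl fun i' _ => ?_
  rw [Finset.sum_comm]
  refine Finset.sum_congr rfl fun j' _ => Finset.sum_congr rfl fun j _ => ?_
  rw [hσ.apply_swap_snd j, mul_neg, neg_neg]

lemma pairSS_gammaPolar_swap (hσ : Admissible k σ) (A B : Fin 4 → Fin k → Fin (2 * k + 2) → ℂ) :
    pairSS k (gammaPolar k B A) σ = pairSS k (gammaPolar k A B) σ := by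
  have hBA : gammaPolar k B A = -fun i i' j j' => gammaPolar k A B i' i j' j := by
    ext i i' j j'
    exact gammaPolar_swap k A B i i' j j'
  rw [hBA, pairSS_neg, pairSS_swap_snd hσ (fun i i' j j' => gammaPolar k A B i' i j j'),
    neg_neg, pairSS_swap_fst hσ]

lemma pairSS_dgamma (hσ : Admissible k σ) (A B : Fin 4 → Fin k → Fin (2 * k + 2) → ℂ) :
    pairSS k (dgamma k A B) σ = pairSS k (gammaPolar k A B) σ := by
  rw [dgamma_eq_gammaPolar]
  change pairSS k ((1 / 4 : ℂ) • (gammaPolar k A B + gammaPolar k B A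
    + (fun i i' j j' => gammaPolar k A B i' i j j')
    + fun i i' j j' => gammaPolar k B A i' i j j')) σ = _
  rw [pairSS_smul, pairSS_add, pairSS_add, pairSS_add, pairSS_swap_fst hσ (gammaPolar k A B),
    pairSS_swap_fst hσ (gammaPolar k B A), pairSS_gammaPolar_swap hσ A B]
  ring

end pairSS

lemma pairSS_gammaPolar (k : ℕ) (A B : Fin 4 → Fin k → Fin (2 * k + 2) → ℂ)
    (σ : Fin k → Fin k → Matrix (Fin 4) (Fin 4) ℂ) :
    pairSS k (gammaPolar k A B) σ
      = (1 / 4) * ∑ a, ∑ c, (xiMap k A σ a c ᵥ* Matrix.of (omegaJ k)) ⬝ᵥ B a c := by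
  simp only [pairSS, gammaPolar, xiMap, vecMul, dotProduct, Matrix.of_apply, Finset.mul_sum,
    Finset.sum_mul]
  -- sort the six sums by index type; each pair of same-typed sums is then matched by one swap
  simp_rw [Finset.sum_comm (γ := Fin (2 * k + 2)) (α := Fin 4),
    Finset.sum_comm (γ := Fin (2 * k + 2)) (α := Fin k), Finset.sum_comm (γ := Fin k) (α := Fin 4)]
  rw [Finset.sum_comm]
  refine Finset.sum_congr rfl fun i _ => Finset.sum_congr rfl fun i' _ => ?_
  rw [Finset.sum_comm]
  refine Finset.sum_congr rfl fun j _ => Finset.sum_congr rfl fun j' _ => ?_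
  rw [Finset.sum_comm]
  exact Finset.sum_congr rfl fun l _ => Finset.sum_congr rfl fun l' _ => by ring

theorem stmt10_general (k : ℕ) (A : Fin 4 → Fin k → Fin (2 * k + 2) → ℂ)
    (σ : Fin k → Fin k → Matrix (Fin 4) (Fin 4) ℂ) (hσ : Admissible k σ) :
    xiMap k A σ = 0 ↔
      ∀ B : Fin 4 → Fin k → Fin (2 * k + 2) → ℂ, pairSS k (dgamma k A B) σ = 0 := by
  simp_rw [pairSS_dgamma hσ, pairSS_gammaPolar,
    mul_eq_zero_iff_left (by norm_num : (1 / 4 : ℂ) ≠ 0), forall_sum_sum_dotProduct_eq_zero_iff]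
  exact ⟨fun h => funext₂ fun a c => by simp [h],
    fun h => funext₂ fun a c => (vecMul_omegaJ_eq_zero_iff k _).mp (congr_fun₂ h a c)⟩

/-- For every `A ∈ ℂ^{4∗}⊗ℂ^{k∗}⊗ℂ^{2k+2}` and every
`S ∈ S²ℂ⁴⊗Λ²ℂ^k` (encoded by the admissible family `σ`):
`ξ(A, S) = 0` iff `⟨dγ|_A(B), S⟩ = 0` for every `B`. -/
theorem stmt10 (k : ℕ) (hk : 2 ≤ k) (A : Fin 4 → Fin k → Fin (2 * k + 2) → ℂ)
    (σ : Fin k → Fin k → Matrix (Fin 4) (Fin 4) ℂ) (hσ : Admissible k σ) :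
    xiMap k A σ = 0 ↔
      ∀ B : Fin 4 → Fin k → Fin (2 * k + 2) → ℂ, pairSS k (dgamma k A B) σ = 0 :=
  stmt10_general k A σ hσ
end
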